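/- arXiv:1302.3867 — 2 statements merged into one kernel-verified Lean document; each statement's English description precedes it below -/
import Mathlib

section
/- Let G = G_1 ⊕_k G_2 be a grounded k-edge sum. If G_1 or G_2 admits a weak immersion of an arbitrary graph H, then G admits a weak immersion of H. -/
/-!
A grounded edge sum `G = G₁ ⊕ₖ G₂` weakly immerses `G₁`: keep `G₁ - v₁` in place and send `v₁`
to the far end `v₂'` of the `k` edge-disjoint `v₂`–`v₂'` paths of `G₂`. Since `v₂` has degree
exactly `k`, each edge `v₂y` starts exactly one of these paths, so an edge `xv₁` of `G₁` can be
routed along the merged edge `xy` and then along the rest of the path through `v₂y`; distinct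
edges use disjoint routes. Weak immersion is transitive (lift a path edge by edge, then shortcut
the resulting walk to a path), so `G` immerses everything `G₁` does, and symmetrically for `G₂`.
-/

open Sym2

/-- A finite multigraph: finite vertex and edge types, each edge has an
unordered pair of endpoints, and there are no loops. -/
structure Multigraph where
  V : Type
  E : Type
  finV : Finite V
  finE : Finite E
  ends : E → Sym2 V
  no_loops : ∀ e, ¬ (ends e).IsDiag

attribute [instance] Multigraph.finV Multigraph.finE

namespace Multigraph

/-- `IsWalk G vs es`: `vs` is the vertex sequence and `es` the edge sequence of a
walk in `G`. -/
inductive IsWalk (G : Multigraph) : List G.V → List G.E → Prop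
  | nil (v : G.V) : IsWalk G [v] []
  | cons {v : G.V} {vs : List G.V} {es : List G.E} (u : G.V) (e : G.E)
      (he : G.ends e = s(u, v)) (hw : IsWalk G (v :: vs) es) :
      IsWalk G (u :: v :: vs) (e :: es)

/-- A path from `a` to `b` in the multigraph `G`, given by its vertex sequence `vs`
and edge sequence `es`. -/
def IsPathBetween (G : Multigraph) (a b : G.V) (vs : List G.V) (es : List G.E) : Prop :=
  G.IsWalk vs es ∧ vs.Nodup ∧ vs.head? = some a ∧ vs.getLast? = some b

/-- A weak immersion of `H` into `G`. -/
structure WeakImmersion (H G : Multigraph) where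
  vmap : H.V → G.V
  vmap_inj : Function.Injective vmap
  pverts : H.E → List G.V
  pedges : H.E → List G.E
  is_path : ∀ f : H.E, ∃ x y : H.V, H.ends f = s(x, y) ∧
    G.IsPathBetween (vmap x) (vmap y) (pverts f) (pedges f)
  edge_disjoint : ∀ f f' : H.E, f ≠ f' → ∀ e, e ∈ pedges f → e ∉ pedges f'

/-- `G.Immerses H`: `G` admits a weak immersion of `H`. -/
def Immerses (G H : Multigraph) : Prop := Nonempty (WeakImmersion H G)

/-- The degree of a vertex: the number of edges incident with it. -/
noncomputable def degree (G : Multigraph) (v : G.V) : ℕ :=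
  Nat.card {e : G.E // v ∈ G.ends e}

/-- The edge cut `δ(U)`: edges with exactly one endpoint in `U`. -/
def edgeCut (G : Multigraph) (U : Set G.V) : Set G.E :=
  {e | ∃ a b, G.ends e = s(a, b) ∧ a ∈ U ∧ b ∉ U}

/-- There exist `k` pairwise edge-disjoint paths from `a` to `b` in `G`. -/
def EdgeDisjointPaths (G : Multigraph) (a b : G.V) (k : ℕ) : Prop :=
  ∃ (vs : Fin k → List G.V) (es : Fin k → List G.E),
    (∀ i, G.IsPathBetween a b (vs i) (es i)) ∧
    ∀ i j, i ≠ j → ∀ e, e ∈ es i → e ∉ es j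

/-- Isomorphism of multigraphs. -/
structure Iso (G H : Multigraph) where
  vmap : G.V ≃ H.V
  emap : G.E ≃ H.E
  ends_map : ∀ e, H.ends (emap e) = Sym2.map vmap (G.ends e)

/-- The complete graph `K_t` as a multigraph. -/
def completeGraph (t : ℕ) : Multigraph where
  V := Fin t
  E := {p : Sym2 (Fin t) // ¬ p.IsDiag}
  finV := inferInstance
  finE := inferInstance
  ends := Subtype.val
  no_loops := fun e => e.prop

/-- The multigraph `S_{k,n}`: vertices `x_1, …, x_n, y` (with `y = none`) and `k`
parallel edges from each `x_i` to `y`. -/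
def star (k n : ℕ) : Multigraph where
  V := Option (Fin n)
  E := Fin n × Fin k
  finV := inferInstance
  finE := inferInstance
  ends := fun p => s(some p.1, none)
  no_loops := fun p => by simp [Sym2.mk_isDiag_iff]

/-! ### Edge sums -/

/-- A witness that `G` is a `k`-edge sum of `G₁` and `G₂`. -/
structure EdgeSumWitness (k : ℕ) (G G₁ G₂ : Multigraph) where
  v₁ : G₁.V
  v₂ : G₂.V
  deg₁ : G₁.degree v₁ = k
  deg₂ : G₂.degree v₂ = k
  π : {e : G₁.E // v₁ ∈ G₁.ends e} ≃ {e : G₂.E // v₂ ∈ G₂.ends e}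
  α : G.V ≃ {x : G₁.V // x ≠ v₁} ⊕ {y : G₂.V // y ≠ v₂}
  β : G.E ≃ ({e : G₁.E // v₁ ∉ G₁.ends e} ⊕ {e : G₂.E // v₂ ∉ G₂.ends e}) ⊕
      {e : G₁.E // v₁ ∈ G₁.ends e}
  ends₁ : ∀ (e : {e : G₁.E // v₁ ∉ G₁.ends e}) (x y : G₁.V) (hx : x ≠ v₁) (hy : y ≠ v₁),
    G₁.ends e.val = s(x, y) →
      G.ends (β.symm (Sum.inl (Sum.inl e))) = s(α.symm (Sum.inl ⟨x, hx⟩), α.symm (Sum.inl ⟨y, hy⟩))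
  ends₂ : ∀ (e : {e : G₂.E // v₂ ∉ G₂.ends e}) (x y : G₂.V) (hx : x ≠ v₂) (hy : y ≠ v₂),
    G₂.ends e.val = s(x, y) →
      G.ends (β.symm (Sum.inl (Sum.inr e))) = s(α.symm (Sum.inr ⟨x, hx⟩), α.symm (Sum.inr ⟨y, hy⟩))
  ends₃ : ∀ (e : {e : G₁.E // v₁ ∈ G₁.ends e}) (x : G₁.V) (y : G₂.V) (hx : x ≠ v₁) (hy : y ≠ v₂),
    G₁.ends e.val = s(x, v₁) → G₂.ends (π e).val = s(y, v₂) →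
      G.ends (β.symm (Sum.inr e)) = s(α.symm (Sum.inl ⟨x, hx⟩), α.symm (Sum.inr ⟨y, hy⟩))

/-- `G` is a `k`-edge sum of `G₁` and `G₂`. -/
def IsEdgeSum (k : ℕ) (G G₁ G₂ : Multigraph) : Prop :=
  Nonempty (EdgeSumWitness k G G₁ G₂)

/-- The edge sum is grounded. -/
def EdgeSumWitness.Grounded {k : ℕ} {G G₁ G₂ : Multigraph}
    (w : EdgeSumWitness k G G₁ G₂) : Prop :=
  (∃ v', v' ≠ w.v₁ ∧ G₁.EdgeDisjointPaths w.v₁ v' k) ∧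
  (∃ v', v' ≠ w.v₂ ∧ G₂.EdgeDisjointPaths w.v₂ v' k)

/-- `G` is a grounded `k`-edge sum of `G₁` and `G₂`. -/
def IsGroundedEdgeSum (k : ℕ) (G G₁ G₂ : Multigraph) : Prop :=
  ∃ w : EdgeSumWitness k G G₁ G₂, w.Grounded

/-! ### Auxiliary simple-graph operations -/

/-- Delete the vertex `t` from `T` (keeping it as an isolated vertex). -/
def delAt {τ : Type} (T : SimpleGraph τ) (t : τ) : SimpleGraph τ where
  Adj a b := T.Adj a b ∧ a ≠ t ∧ b ≠ t
  symm := ⟨fun a b h => ⟨h.1.symm, h.2.2, h.2.1⟩⟩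
  loopless := ⟨fun a h => T.loopless.irrefl a h.1⟩

lemma reach_delAt {τ : Type} (T : SimpleGraph τ) (t : τ) {a b : τ} (q : T.Walk a b)
    (ht : t ∉ q.support) : (delAt T t).Reachable a b := by
  induction q with
  | nil => exact SimpleGraph.Reachable.refl _
  | @cons u v w h p ih =>
      simp only [SimpleGraph.Walk.support_cons, List.mem_cons] at ht
      push_neg at ht
      have hv : v ≠ t := fun hv => ht.2 (hv ▸ p.start_mem_support)
      exact (SimpleGraph.Adj.reachable (G := delAt T t) (u := u) (v := v) ⟨h, Ne.symm ht.1, hv⟩).trans (ih ht.2)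

/-! ### Tree-cut decompositions -/

/-- A tree-cut decomposition of the multigraph `G`. -/
structure TreeCutDecomp (G : Multigraph) where
  T : Type
  finT : Finite T
  tree : SimpleGraph T
  isTree : tree.IsTree
  bag : T → Set G.V
  disj : ∀ s t : T, s ≠ t → Disjoint (bag s) (bag t)
  covers : ∀ v : G.V, ∃ t : T, v ∈ bag t

attribute [instance] TreeCutDecomp.finT

variable {G : Multigraph}

/-- The union of the bags on the `v`-side of the tree edge `uv`. -/
def TreeCutDecomp.sideSet (D : TreeCutDecomp G) (u v : D.T) : Set G.V :=
  {x | ∃ s, (D.tree.deleteEdges {s(u, v)}).Reachable v s ∧ x ∈ D.bag s}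

/-- The adhesion of a tree-cut decomposition. -/
noncomputable def TreeCutDecomp.adhesion (D : TreeCutDecomp G) : ℕ :=
  sSup {n | ∃ u v : D.T, D.tree.Adj u v ∧ n = (G.edgeCut (D.sideSet u v)).ncard}

lemma TreeCutDecomp.exists_periph (D : TreeCutDecomp G) (t : D.T) (v : G.V)
    (hv : v ∉ D.bag t) :
    ∃ u : D.T, D.tree.Adj t u ∧ ∃ s, v ∈ D.bag s ∧ (delAt D.tree t).Reachable s u := by
  classical
  obtain ⟨s, hs⟩ := D.covers v
  have hst : t ≠ s := fun h => hv (h ▸ hs)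
  obtain ⟨w⟩ := D.isTree.isConnected.preconnected t s
  obtain ⟨x, hadj, q, hq⟩ := SimpleGraph.Walk.exists_eq_cons_of_ne hst w.toPath.val
  have hP : (SimpleGraph.Walk.cons hadj q).IsPath := hq ▸ w.toPath.prop
  rw [SimpleGraph.Walk.cons_isPath_iff] at hP
  exact ⟨x, hadj, s, hs, (reach_delAt D.tree t q hP.2).symm⟩

open Classical in
/-- The map from `G` to the vertices of the torso at `t`. -/
noncomputable def TreeCutDecomp.proj (D : TreeCutDecomp G) (t : D.T) (v : G.V) :
    ↥(D.bag t) ⊕ {u : D.T // D.tree.Adj t u} :=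
  if hv : v ∈ D.bag t then Sum.inl ⟨v, hv⟩
  else Sum.inr ⟨(D.exists_periph t v hv).choose, (D.exists_periph t v hv).choose_spec.1⟩

/-- The torso of `G` at a node `t` of a tree-cut decomposition. -/
noncomputable def TreeCutDecomp.torso (D : TreeCutDecomp G) (t : D.T) : Multigraph where
  V := ↥(D.bag t) ⊕ {u : D.T // D.tree.Adj t u}
  E := {e : G.E // ¬ (Sym2.map (D.proj t) (G.ends e)).IsDiag}
  finV := inferInstance
  finE := inferInstance
  ends := fun e => Sym2.map (D.proj t) (G.ends e.val)
  no_loops := fun e => e.prop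

/-- The core vertices of the torso at `t`. -/
def TreeCutDecomp.torsoCore (D : TreeCutDecomp G) (t : D.T) : Set (D.torso t).V :=
  Set.range Sum.inl

/-! ### The 3-center and tree-cut width -/

/-- Condition (1): the immersion of `H` in `G` covers `X` and every vertex of `H`
of degree at most two is mapped into `X`. -/
def CenterCond (G : Multigraph) (X : Set G.V) (H : Multigraph) (I : WeakImmersion H G) : Prop :=
  X ⊆ Set.range I.vmap ∧ ∀ x : H.V, H.degree x ≤ 2 → I.vmap x ∈ X

/-- `C` is a 3-center of `(G, X)`: it admits an immersion in `G` satisfying (1) and is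
maximal with respect to immersion containment among all such graphs. -/
def IsThreeCenter (G : Multigraph) (X : Set G.V) (C : Multigraph) : Prop :=
  (∃ I : WeakImmersion C G, CenterCond G X C I) ∧
  ∀ H : Multigraph, (∃ I : WeakImmersion H G, CenterCond G X H I) → C.Immerses H

/-- The number of vertices of the 3-center of `(G, X)`. -/
noncomputable def threeCenterCard (G : Multigraph) (X : Set G.V) : ℕ :=
  sSup {n | ∃ C : Multigraph, IsThreeCenter G X C ∧ Nat.card C.V = n}

/-- The width of a tree-cut decomposition. -/
noncomputable def TreeCutDecomp.width (D : TreeCutDecomp G) : ℕ :=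
  max D.adhesion (sSup {n | ∃ t : D.T, n = threeCenterCard (D.torso t) (D.torsoCore t)})

/-- The tree-cut width of a multigraph. -/
noncomputable def tcw (G : Multigraph) : ℕ :=
  sInf {w | ∃ D : TreeCutDecomp G, D.width = w}

/-! ### Tree decompositions and tree-width -/

/-- A tree decomposition of the multigraph `G`. -/
structure TreeDecomp (G : Multigraph) where
  T : Type
  finT : Finite T
  tree : SimpleGraph T
  isTree : tree.IsTree
  bag : T → Set G.V
  covers_v : ∀ v : G.V, ∃ t : T, v ∈ bag t
  covers_e : ∀ e : G.E, ∃ (t : T) (x y : G.V), G.ends e = s(x, y) ∧ x ∈ bag t ∧ y ∈ bag t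
  connected : ∀ v : G.V, (SimpleGraph.induce {t : T | v ∈ bag t} tree).Connected

/-- The tree-width of a multigraph. -/
noncomputable def treewidth (G : Multigraph) : ℕ :=
  sInf {n | ∃ D : TreeDecomp G, ∀ t : D.T, (D.bag t).ncard ≤ n + 1}

/-! ### Walls and grids -/

def wallStep (r : ℕ) (a b : Fin r × Fin r) : Prop :=
  (a.1 = b.1 ∧ a.2.val + 1 = b.2.val) ∨
  (a.2 = b.2 ∧ a.1.val + 1 = b.1.val ∧ (a.1.val + 1) % 2 = (a.2.val + 1) % 2)

def wallAdj (r : ℕ) (a b : Fin r × Fin r) : Prop := wallStep r a b ∨ wallStep r b a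

lemma wallStep_ne {r : ℕ} {a b : Fin r × Fin r} (h : wallStep r a b) : a ≠ b := by
  rintro rfl
  rcases h with ⟨-, h⟩ | ⟨-, h, -⟩ <;> omega

/-- The `r`-wall `H_r`. -/
def wall (r : ℕ) : Multigraph where
  V := Fin r × Fin r
  E := {q : Sym2 (Fin r × Fin r) // ∃ a b, q = s(a, b) ∧ wallAdj r a b}
  finV := inferInstance
  finE := inferInstance
  ends := Subtype.val
  no_loops := by
    rintro ⟨q, a, b, rfl, hab⟩ hd
    rw [Sym2.mk_isDiag_iff] at hd
    subst hd
    rcases hab with h | h <;> exact wallStep_ne h rfl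

def gridStep (r : ℕ) (a b : Fin r × Fin r) : Prop :=
  (a.1 = b.1 ∧ a.2.val + 1 = b.2.val) ∨ (a.2 = b.2 ∧ a.1.val + 1 = b.1.val)

def gridAdj (r : ℕ) (a b : Fin r × Fin r) : Prop := gridStep r a b ∨ gridStep r b a

lemma gridStep_ne {r : ℕ} {a b : Fin r × Fin r} (h : gridStep r a b) : a ≠ b := by
  rintro rfl
  rcases h with ⟨-, h⟩ | ⟨-, h⟩ <;> omega

/-- The `r × r` grid. -/
def grid (r : ℕ) : Multigraph where
  V := Fin r × Fin r
  E := {q : Sym2 (Fin r × Fin r) // ∃ a b, q = s(a, b) ∧ gridAdj r a b}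
  finV := inferInstance
  finE := inferInstance
  ends := Subtype.val
  no_loops := by
    rintro ⟨q, a, b, rfl, hab⟩ hd
    rw [Sym2.mk_isDiag_iff] at hd
    subst hd
    rcases hab with h | h <;> exact gridStep_ne h rfl

/-! ### Subdivisions and minors -/

/-- `G` contains `H` as a subdivision: an immersion whose composite paths pairwise
meet only in common endpoints. -/
def ContainsSubdivision (G H : Multigraph) : Prop :=
  ∃ I : WeakImmersion H G, ∀ f f' : H.E, f ≠ f' → ∀ v : G.V,
    v ∈ I.pverts f → v ∈ I.pverts f' →
      ((I.pverts f).head? = some v ∨ (I.pverts f).getLast? = some v) ∧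
      ((I.pverts f').head? = some v ∨ (I.pverts f').getLast? = some v)

/-- A set of vertices is connected in `G`. -/
def ConnectedIn (G : Multigraph) (B : Set G.V) : Prop :=
  B.Nonempty ∧ ∀ a ∈ B, ∀ b ∈ B, ∃ (vs : List G.V) (es : List G.E),
    G.IsWalk vs es ∧ vs.head? = some a ∧ vs.getLast? = some b ∧ ∀ v ∈ vs, v ∈ B

/-- `G` contains `H` as a minor. -/
def HasMinor (G H : Multigraph) : Prop :=
  ∃ B : H.V → Set G.V,
    (∀ x, G.ConnectedIn (B x)) ∧
    (∀ x y, x ≠ y → Disjoint (B x) (B y)) ∧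
    ∃ η : H.E → G.E, Function.Injective η ∧
      ∀ (f : H.E) (x y : H.V), H.ends f = s(x, y) →
        ∃ a b, G.ends (η f) = s(a, b) ∧ a ∈ B x ∧ b ∈ B y

/-! ### Subgraphs, splitting off, suppression -/

/-- `A` is (isomorphic to) a subgraph of `G`. -/
def IsSubgraph (A G : Multigraph) : Prop :=
  ∃ (fv : A.V → G.V) (fe : A.E → G.E), Function.Injective fv ∧ Function.Injective fe ∧
    ∀ e, G.ends (fe e) = Sym2.map fv (A.ends e)

/-- `B` is obtained from `A` by splitting off a pair of incident edges. -/
def SplitOffRel (A B : Multigraph) : Prop :=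
  ∃ (e₁ e₂ : A.E) (x y z : A.V), e₁ ≠ e₂ ∧ x ≠ z ∧
    A.ends e₁ = s(x, y) ∧ A.ends e₂ = s(y, z) ∧
    ∃ (fV : A.V ≃ B.V) (fE : {e : A.E // e ≠ e₁ ∧ e ≠ e₂} ⊕ Unit ≃ B.E),
      (∀ e : {e : A.E // e ≠ e₁ ∧ e ≠ e₂},
        B.ends (fE (Sum.inl e)) = Sym2.map fV (A.ends e.val)) ∧
      B.ends (fE (Sum.inr ())) = s(fV x, fV z)

/-- `B` is obtained from `A` by suppressing a vertex of degree two (contracting one of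
its incident edges and deleting any resulting loops). -/
def SuppressTwoRel (A B : Multigraph) : Prop :=
  ∃ v : A.V, A.degree v = 2 ∧
    ∃ σ : A.V → B.V,
      (∀ x y, x ≠ v → y ≠ v → (σ x = σ y ↔ x = y)) ∧
      (∀ y : B.V, ∃ x, x ≠ v ∧ σ x = y) ∧
      (∃ a, a ≠ v ∧ (∃ e, A.ends e = s(v, a)) ∧ σ v = σ a) ∧
      ∃ τ : {e : A.E // ¬ (Sym2.map σ (A.ends e)).IsDiag} ≃ B.E,
        ∀ e, B.ends (τ e) = Sym2.map σ (A.ends e.val)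

/-- A multigraph together with a marked set of vertices. -/
structure MarkedGraph where
  G : Multigraph
  X : Set G.V

/-- One step of suppressing a vertex outside the marked set of degree at most two
(for degree zero this deletes the vertex). -/
def SuppressStep (A B : MarkedGraph) : Prop :=
  ∃ v : A.G.V, v ∉ A.X ∧ A.G.degree v ≤ 2 ∧
    ∃ σ : A.G.V → B.G.V,
      (∀ x y, x ≠ v → y ≠ v → (σ x = σ y ↔ x = y)) ∧
      (∀ y : B.G.V, ∃ x, x ≠ v ∧ σ x = y) ∧
      B.X = {y | ∃ x, x ∈ A.X ∧ σ x = y} ∧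
      (1 ≤ A.G.degree v → ∃ a, a ≠ v ∧ (∃ e, A.G.ends e = s(v, a)) ∧ σ v = σ a) ∧
      ∃ τ : {e : A.G.E // ¬ (Sym2.map σ (A.G.ends e)).IsDiag} ≃ B.G.E,
        ∀ e, B.G.ends (τ e) = Sym2.map σ (A.G.ends e.val)

/-! ### Trees and cycles as multigraphs -/

/-- A multigraph is a tree if it corresponds to a simple tree on its vertex set. -/
def IsTreeGraph (G : Multigraph) : Prop :=
  ∃ S : SimpleGraph G.V, S.IsTree ∧ ∃ φ : G.E ≃ S.edgeSet, ∀ e, (φ e : Sym2 G.V) = G.ends e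

/-- The cycle on `n + 3` vertices. -/
def cycleGraph (n : ℕ) : Multigraph where
  V := Fin (n + 3)
  E := Fin (n + 3)
  finV := inferInstance
  finE := inferInstance
  ends := fun i => s(i, i + 1)
  no_loops := by
    intro i hd
    rw [Sym2.mk_isDiag_iff] at hd
    have h1 : (i : Fin (n + 3)) + 0 = i + 1 := by simpa using hd
    have h01 : (0 : Fin (n + 3)) = 1 := add_left_cancel h1
    have := congrArg Fin.val h01
    simp [Fin.val_one] at this

/-- A matching in a multigraph: a set of pairwise vertex-disjoint edges. -/
def IsMatching (G : Multigraph) (M : Set G.E) : Prop :=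
  ∀ e ∈ M, ∀ e' ∈ M, e ≠ e' → ∀ v : G.V, v ∈ G.ends e → v ∉ G.ends e'

theorem exists_ends_eq (G : Multigraph) (e : G.E) : ∃ x y, G.ends e = s(x, y) :=
  Sym2.ind (f := fun z => ∃ x y, z = s(x, y)) (fun x y => ⟨x, y, rfl⟩) _

theorem ne_of_ends_eq {e : G.E} {x y : G.V} (h : G.ends e = s(x, y)) : x ≠ y := by
  rintro rfl
  exact G.no_loops e (h ▸ Sym2.mk_isDiag_iff.2 rfl)

section Walks

variable {a b c : G.V} {vs : List G.V} {es : List G.E}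

def IsWalkBetween (G : Multigraph) (a b : G.V) (vs : List G.V) (es : List G.E) : Prop :=
  G.IsWalk vs es ∧ vs.head? = some a ∧ vs.getLast? = some b

theorem isPathBetween_iff : G.IsPathBetween a b vs es ↔ G.IsWalkBetween a b vs es ∧ vs.Nodup := by
  unfold IsPathBetween IsWalkBetween
  tauto

theorem isWalkBetween_singleton (v : G.V) : G.IsWalkBetween v v [v] [] :=
  ⟨.nil v, rfl, rfl⟩

theorem IsWalkBetween.cons {e : G.E} (he : G.ends e = s(a, c)) (h : G.IsWalkBetween c b vs es) :
    G.IsWalkBetween a b (a :: vs) (e :: es) := by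
  obtain ⟨hw, hh, hl⟩ := h
  obtain ⟨t, rfl⟩ := List.head?_eq_some_iff.1 hh
  exact ⟨.cons a e he hw, rfl, by simpa using hl⟩

theorem IsWalkBetween.append {vs₂ : List G.V} {es₂ : List G.E} (h₁ : G.IsWalkBetween a b vs es)
    (h₂ : G.IsWalkBetween b c vs₂ es₂) :
    G.IsWalkBetween a c (vs ++ vs₂.tail) (es ++ es₂) := by
  obtain ⟨hw, hh, hl⟩ := h₁
  induction hw generalizing a with
  | nil v =>
    obtain ⟨rfl, rfl⟩ : v = a ∧ v = b := by simp_all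
    obtain ⟨t, rfl⟩ := List.head?_eq_some_iff.1 h₂.2.1
    simpa using h₂
  | cons u e he _ ih =>
    obtain rfl : u = a := by simpa using hh
    exact (ih rfl (by simpa using hl)).cons he

theorem IsWalkBetween.reverse (h : G.IsWalkBetween a b vs es) :
    G.IsWalkBetween b a vs.reverse es.reverse := by
  obtain ⟨hw, hh, hl⟩ := h
  induction hw generalizing a b with
  | nil v =>
    obtain ⟨rfl, rfl⟩ : v = a ∧ v = b := by simp_all
    exact isWalkBetween_singleton v
  | cons u e he _ ih =>
    obtain rfl : u = a := by simpa using hh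
    have hback := (ih rfl (by simpa using hl)).append
      ((isWalkBetween_singleton u).cons (he.trans Sym2.eq_swap))
    simpa using hback

theorem IsWalk.mem_of_mem_ends {e : G.E} {x : G.V} (h : G.IsWalk vs es) (he : e ∈ es)
    (hx : x ∈ G.ends e) : x ∈ vs := by
  induction h with
  | nil v => simp at he
  | cons u e' he' _ ih =>
    rcases List.mem_cons.1 he with rfl | he
    · rw [he', Sym2.mem_iff] at hx
      rcases hx with rfl | rfl <;> simp
    · exact List.mem_cons_of_mem _ (ih he)

theorem IsWalk.exists_suffix (h : G.IsWalk vs es) {u : G.V} (hu : u ∈ vs) :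
    ∃ vs' es', u :: vs' <:+ vs ∧ es' <:+ es ∧ G.IsWalk (u :: vs') es' := by
  induction h with
  | nil v =>
    obtain rfl := List.mem_singleton.1 hu
    exact ⟨[], [], List.suffix_refl _, List.suffix_refl _, .nil u⟩
  | cons u₀ e he hw ih =>
    rcases List.mem_cons.1 hu with rfl | hu
    · exact ⟨_, _, List.suffix_refl _, List.suffix_refl _, .cons u e he hw⟩
    · obtain ⟨vs', es', hvs, hes, hw'⟩ := ih hu
      exact ⟨vs', es', hvs.trans (List.suffix_cons _ _), hes.trans (List.suffix_cons _ _), hw'⟩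

theorem IsPathBetween.cons {e : G.E} (he : G.ends e = s(a, c)) (ha : a ∉ vs)
    (h : G.IsPathBetween c b vs es) : G.IsPathBetween a b (a :: vs) (e :: es) := by
  rw [isPathBetween_iff] at h ⊢
  exact ⟨h.1.cons he, List.nodup_cons.2 ⟨ha, h.2⟩⟩

theorem IsPathBetween.exists_suffix (h : G.IsPathBetween a b vs es) {u : G.V} (hu : u ∈ vs) :
    ∃ vs' es', G.IsPathBetween u b vs' es' ∧ es' ⊆ es := by
  obtain ⟨hw, hnd, -, hl⟩ := h
  obtain ⟨vs', es', ⟨l, rfl⟩, hes, hw'⟩ := hw.exists_suffix hu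
  refine ⟨u :: vs', es', ⟨hw', hnd.sublist (List.sublist_append_right l _), rfl, ?_⟩, hes.subset⟩
  rwa [List.getLast?_append_of_ne_nil _ (List.cons_ne_nil _ _)] at hl

theorem IsWalkBetween.exists_isPathBetween (h : G.IsWalkBetween a b vs es) :
    ∃ vs' es', G.IsPathBetween a b vs' es' ∧ es' ⊆ es := by
  obtain ⟨hw, hh, hl⟩ := h
  induction hw generalizing a with
  | nil v =>
    obtain ⟨rfl, rfl⟩ : v = a ∧ v = b := by simp_all
    exact ⟨[v], [], isPathBetween_iff.2 ⟨isWalkBetween_singleton v, List.nodup_singleton v⟩,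
      List.Subset.refl _⟩
  | cons u e he _ ih =>
    obtain rfl : u = a := by simpa using hh
    obtain ⟨pv, pe, hp, hsub⟩ := ih rfl (by simpa using hl)
    by_cases hu : u ∈ pv
    · obtain ⟨vs', es', hp', hsub'⟩ := hp.exists_suffix hu
      exact ⟨vs', es', hp',
        List.Subset.trans hsub' (List.Subset.trans hsub (List.subset_cons_self _ _))⟩
    · exact ⟨u :: pv, e :: pe, hp.cons he hu, List.cons_subset_cons _ hsub⟩

theorem IsPathBetween.exists_cons (h : G.IsPathBetween a b vs es) (hab : a ≠ b) :
    ∃ e y vs' es', vs = a :: vs' ∧ es = e :: es' ∧ G.ends e = s(a, y) ∧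
      G.IsPathBetween y b vs' es' ∧ a ∉ vs' := by
  obtain ⟨hw, hnd, hh, hl⟩ := h
  cases hw with
  | nil v =>
    obtain ⟨rfl, rfl⟩ : v = a ∧ v = b := by simp_all
    exact absurd rfl hab
  | cons u e he hw =>
    obtain rfl : u = a := by simpa using hh
    obtain ⟨ha, hnd⟩ := List.nodup_cons.1 hnd
    exact ⟨e, _, _, _, rfl, rfl, he, ⟨hw, hnd, rfl, by simpa using hl⟩, ha⟩

theorem IsWalk.map {G' : Multigraph} {f : G.V → G'.V} {g : G.E → G'.E} (h : G.IsWalk vs es)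
    (hends : ∀ e ∈ es, G'.ends (g e) = (G.ends e).map f) :
    G'.IsWalk (vs.map f) (es.map g) := by
  induction h with
  | nil v => exact .nil (f v)
  | cons u e he _ ih =>
    refine .cons (f u) (g e) ?_ (ih fun e' he' => hends e' (List.mem_cons_of_mem _ he'))
    rw [hends e List.mem_cons_self, he, Sym2.map_mk]

theorem IsPathBetween.map {G' : Multigraph} {f : G.V → G'.V} {g : G.E → G'.E}
    (h : G.IsPathBetween a b vs es) (hf : ∀ x ∈ vs, ∀ y ∈ vs, f x = f y → x = y)
    (hends : ∀ e ∈ es, G'.ends (g e) = (G.ends e).map f) :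
    G'.IsPathBetween (f a) (f b) (vs.map f) (es.map g) := by
  obtain ⟨hw, hnd, hh, hl⟩ := h
  exact ⟨hw.map hends, hnd.map_on hf, by simp [hh], by simp [hl]⟩

end Walks

section Immersions

variable {K H : Multigraph}

theorem WeakImmersion.exists_isWalkBetween_of_ends (I : WeakImmersion H G) {f : H.E}
    {x y : H.V} (hf : H.ends f = s(x, y)) :
    ∃ vs es, G.IsWalkBetween (I.vmap x) (I.vmap y) vs es ∧ es ⊆ I.pedges f := by
  obtain ⟨x', y', hf', hp⟩ := I.is_path f
  rw [hf, Sym2.eq_iff] at hf'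
  rcases hf' with ⟨rfl, rfl⟩ | ⟨rfl, rfl⟩
  · exact ⟨_, _, (isPathBetween_iff.1 hp).1, List.Subset.refl _⟩
  · exact ⟨_, _, (isPathBetween_iff.1 hp).1.reverse, fun _ => List.mem_reverse.1⟩

theorem WeakImmersion.exists_isWalkBetween_map (I : WeakImmersion H G) {a b : H.V}
    {vs : List H.V} {es : List H.E} (h : H.IsWalkBetween a b vs es) :
    ∃ vs' es', G.IsWalkBetween (I.vmap a) (I.vmap b) vs' es' ∧ es' ⊆ es.flatMap I.pedges := by
  obtain ⟨hw, hh, hl⟩ := h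
  induction hw generalizing a with
  | nil v =>
    obtain ⟨rfl, rfl⟩ : v = a ∧ v = b := by simp_all
    exact ⟨_, _, isWalkBetween_singleton _, List.nil_subset _⟩
  | cons u e he _ ih =>
    obtain rfl : u = a := by simpa using hh
    obtain ⟨vs₁, es₁, h₁, hsub₁⟩ := I.exists_isWalkBetween_of_ends he
    obtain ⟨vs₂, es₂, h₂, hsub₂⟩ := ih rfl (by simpa using hl)
    refine ⟨_, _, h₁.append h₂, ?_⟩
    rw [List.flatMap_cons]
    exact List.append_subset.2
      ⟨fun _ h => List.mem_append_left _ (hsub₁ h), fun _ h => List.mem_append_right _ (hsub₂ h)⟩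

theorem Immerses.trans (hGK : G.Immerses K) (hKH : K.Immerses H) : G.Immerses H := by
  obtain ⟨J⟩ := hGK
  obtain ⟨I⟩ := hKH
  have hroute : ∀ f, ∃ x y vs es, H.ends f = s(x, y) ∧
      G.IsPathBetween (J.vmap (I.vmap x)) (J.vmap (I.vmap y)) vs es ∧
      es ⊆ (I.pedges f).flatMap J.pedges := by
    intro f
    obtain ⟨x, y, hxy, hp⟩ := I.is_path f
    obtain ⟨vs, es, hw, hsub⟩ := J.exists_isWalkBetween_map (isPathBetween_iff.1 hp).1
    obtain ⟨vs', es', hp', hsub'⟩ := hw.exists_isPathBetween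
    exact ⟨x, y, vs', es', hxy, hp', List.Subset.trans hsub' hsub⟩
  choose x y vs es hxy hp hsub using hroute
  refine ⟨⟨J.vmap ∘ I.vmap, J.vmap_inj.comp I.vmap_inj, vs, es,
    fun f => ⟨x f, y f, hxy f, hp f⟩, fun f f' hff e he he' => ?_⟩⟩
  obtain ⟨d, hd, hed⟩ := List.mem_flatMap.1 (hsub f he)
  obtain ⟨d', hd', hed'⟩ := List.mem_flatMap.1 (hsub f' he')
  by_cases hdd : d = d'
  · subst hdd
    exact I.edge_disjoint f f' hff d hd hd'
  · exact J.edge_disjoint d d' hdd e hed hed'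

end Immersions

section Fans

/-- Edge-disjoint paths from `a` to `b`, one leaving `a` through each edge `g` at `a`;
`verts g` and `edges g` describe that path after its first edge `g`. -/
structure Fan (G : Multigraph) (a b : G.V) where
  verts : {e // a ∈ G.ends e} → List G.V
  edges : {e // a ∈ G.ends e} → List G.E
  isPath : ∀ g, ∃ y, G.ends g.1 = s(a, y) ∧ G.IsPathBetween y b (verts g) (edges g) ∧
    a ∉ verts g
  disjoint : ∀ g g', g ≠ g' → ∀ e ∈ edges g, e ∉ edges g'

variable {a b : G.V}

theorem Fan.not_mem_ends (F : G.Fan a b) {g : {e // a ∈ G.ends e}} {q : G.E}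
    (hq : q ∈ F.edges g) : a ∉ G.ends q := by
  obtain ⟨y, -, hp, ha⟩ := F.isPath g
  exact fun hmem => ha (hp.1.mem_of_mem_ends hq hmem)

/-- Since `a` has exactly `k` edges, each of them starts one of the `k` paths. -/
theorem EdgeDisjointPaths.nonempty_fan {k : ℕ} (hP : G.EdgeDisjointPaths a b k) (hab : a ≠ b)
    (hdeg : G.degree a = k) : Nonempty (G.Fan a b) := by
  obtain ⟨pv, pe, hpath, hdisj⟩ := hP
  choose e y vs es hvs hes hends htail ha using fun i => (hpath i).exists_cons hab
  let first : Fin k → {e // a ∈ G.ends e} :=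
    fun i => ⟨e i, by rw [hends i]; exact Sym2.mem_mk_left _ _⟩
  have hfirst : Function.Injective first := by
    intro i j hij
    by_contra hne
    refine hdisj i j hne (e i) (by simp [hes i]) ?_
    rw [hes j, show e i = e j from congrArg Subtype.val hij]
    exact List.mem_cons_self
  let σ := (Equiv.ofBijective first
    ((Nat.bijective_iff_injective_and_card first).2 ⟨hfirst, by simp [← hdeg, degree]⟩)).symm
  refine ⟨⟨fun g => vs (σ g), fun g => es (σ g), fun g => ?_, fun g g' hne q hq hq' => ?_⟩⟩
  · have hσ : e (σ g) = g.1 := congrArg Subtype.val (σ.symm_apply_apply g)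
    exact ⟨y (σ g), hσ ▸ hends (σ g), htail _, ha _⟩
  · refine hdisj (σ g) (σ g') (σ.injective.ne hne) q ?_ ?_
    · rw [hes]; exact List.mem_cons_of_mem _ hq
    · rw [hes]; exact List.mem_cons_of_mem _ hq'

end Fans

namespace EdgeSumWitness

section Embedding

variable {k : ℕ} {G₁ G₂ : Multigraph} (w : EdgeSumWitness k G G₁ G₂) (b : {y : G₂.V // y ≠ w.v₂})

noncomputable def vertexMap₁ (x : G₁.V) : G.V :=
  open Classical in
  if h : x = w.v₁ then w.α.symm (.inr b) else w.α.symm (.inl ⟨x, h⟩)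

noncomputable def vertexMap₂ (y : G₂.V) : G.V :=
  open Classical in
  if h : y = w.v₂ then w.α.symm (.inr b) else w.α.symm (.inr ⟨y, h⟩)

noncomputable def edgeMap₁ (e : G₁.E) : G.E :=
  open Classical in
  if h : w.v₁ ∈ G₁.ends e then w.β.symm (.inr ⟨e, h⟩) else w.β.symm (.inl (.inl ⟨e, h⟩))

noncomputable def edgeMap₂ (q : G₂.E) : G.E :=
  open Classical in
  if h : w.v₂ ∈ G₂.ends q then w.β.symm (.inr (w.π.symm ⟨q, h⟩))
  else w.β.symm (.inl (.inr ⟨q, h⟩))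

theorem vertexMap₁_injective : Function.Injective (w.vertexMap₁ b) := by
  intro x y hxy
  unfold vertexMap₁ at hxy
  split_ifs at hxy <;> simp_all

theorem vertexMap₂_injOn : Set.InjOn (w.vertexMap₂ b) {y | y ≠ w.v₂} := by
  intro y (hy : y ≠ w.v₂) y' (hy' : y' ≠ w.v₂) h
  simpa [vertexMap₂, hy, hy'] using h

theorem vertexMap₁_ne_vertexMap₂ {x : G₁.V} (hx : x ≠ w.v₁) (y : G₂.V) :
    w.vertexMap₁ b x ≠ w.vertexMap₂ b y := by
  simp only [vertexMap₁, hx, dite_false, vertexMap₂]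
  split_ifs <;> simp

theorem vertexMap₁_v₁ : w.vertexMap₁ b w.v₁ = w.vertexMap₂ b b := by
  simp [vertexMap₁, vertexMap₂, b.2]

theorem edgeMap₁_injective : Function.Injective w.edgeMap₁ := by
  intro e e' h
  unfold edgeMap₁ at h
  split_ifs at h <;> simp_all

theorem edgeMap₂_injective : Function.Injective w.edgeMap₂ := by
  intro q q' h
  unfold edgeMap₂ at h
  split_ifs at h <;> simp_all

theorem edgeMap₁_ne_edgeMap₂ (e : G₁.E) {q : G₂.E} (hq : w.v₂ ∉ G₂.ends q) :
    w.edgeMap₁ e ≠ w.edgeMap₂ q := by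
  unfold edgeMap₁ edgeMap₂
  split_ifs <;> simp

theorem ends_edgeMap₁ {e : G₁.E} (he : w.v₁ ∉ G₁.ends e) :
    G.ends (w.edgeMap₁ e) = (G₁.ends e).map (w.vertexMap₁ b) := by
  obtain ⟨x, y, hxy⟩ := G₁.exists_ends_eq e
  have hx : x ≠ w.v₁ := fun h => he (by simp [hxy, h])
  have hy : y ≠ w.v₁ := fun h => he (by simp [hxy, h])
  rw [edgeMap₁, dif_neg he, hxy, Sym2.map_mk, vertexMap₁, dif_neg hx, vertexMap₁, dif_neg hy]
  exact w.ends₁ ⟨e, he⟩ x y hx hy hxy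

theorem ends_edgeMap₂ {q : G₂.E} (hq : w.v₂ ∉ G₂.ends q) :
    G.ends (w.edgeMap₂ q) = (G₂.ends q).map (w.vertexMap₂ b) := by
  obtain ⟨x, y, hxy⟩ := G₂.exists_ends_eq q
  have hx : x ≠ w.v₂ := fun h => hq (by simp [hxy, h])
  have hy : y ≠ w.v₂ := fun h => hq (by simp [hxy, h])
  rw [edgeMap₂, dif_neg hq, hxy, Sym2.map_mk, vertexMap₂, dif_neg hx, vertexMap₂, dif_neg hy]
  exact w.ends₂ ⟨q, hq⟩ x y hx hy hxy

theorem ends_edgeMap₁_of_mem {e : G₁.E} (he : w.v₁ ∈ G₁.ends e) {x : G₁.V} {y : G₂.V}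
    (hx : x ≠ w.v₁) (hy : y ≠ w.v₂) (hxe : G₁.ends e = s(x, w.v₁))
    (hyπ : G₂.ends (w.π ⟨e, he⟩).1 = s(w.v₂, y)) :
    G.ends (w.edgeMap₁ e) = s(w.vertexMap₁ b x, w.vertexMap₂ b y) := by
  simpa [edgeMap₁, vertexMap₁, vertexMap₂, he, hx, hy] using
    w.ends₃ ⟨e, he⟩ x y hx hy hxe (hyπ.trans Sym2.eq_swap)

end Embedding

section Route

variable {k : ℕ} {G₁ G₂ : Multigraph} (w : EdgeSumWitness k G G₁ G₂) {b : {y : G₂.V // y ≠ w.v₂}}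
  (F : G₂.Fan w.v₂ b)

noncomputable def detour (e : G₁.E) : List G₂.E :=
  open Classical in
  if h : w.v₁ ∈ G₁.ends e then F.edges (w.π ⟨e, h⟩) else []

noncomputable def route (e : G₁.E) : List G.E :=
  w.edgeMap₁ e :: (w.detour F e).map w.edgeMap₂

theorem not_mem_ends_of_mem_detour {e : G₁.E} {q : G₂.E} (hq : q ∈ w.detour F e) :
    w.v₂ ∉ G₂.ends q := by
  unfold detour at hq
  split_ifs at hq
  · exact F.not_mem_ends hq
  · simp at hq

theorem detour_disjoint {e e' : G₁.E} (hne : e ≠ e') {q : G₂.E} (hq : q ∈ w.detour F e) :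
    q ∉ w.detour F e' := by
  unfold detour at hq ⊢
  split_ifs at hq ⊢ with h h'
  · exact F.disjoint _ _ (fun hπ => hne (congrArg Subtype.val (w.π.injective hπ))) q hq
  all_goals simp_all

theorem route_disjoint {e e' : G₁.E} (hne : e ≠ e') (d : G.E) (hd : d ∈ w.route F e) :
    d ∉ w.route F e' := by
  simp only [route, List.mem_cons, List.mem_map] at hd ⊢
  rintro (rfl | ⟨q', hq', rfl⟩)
  · rcases hd with hd | ⟨q, hq, hd⟩
    · exact hne (w.edgeMap₁_injective hd).symm
    · exact w.edgeMap₁_ne_edgeMap₂ e' (w.not_mem_ends_of_mem_detour F hq) hd.symm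
  · rcases hd with hd | ⟨q, hq, hd⟩
    · exact w.edgeMap₁_ne_edgeMap₂ e (w.not_mem_ends_of_mem_detour F hq') hd.symm
    · exact w.detour_disjoint F hne hq (w.edgeMap₂_injective hd ▸ hq')

theorem isPathBetween_route_of_not_mem {e : G₁.E} (he : w.v₁ ∉ G₁.ends e) {x y : G₁.V}
    (hxy : G₁.ends e = s(x, y)) :
    G.IsPathBetween (w.vertexMap₁ b x) (w.vertexMap₁ b y)
      [w.vertexMap₁ b x, w.vertexMap₁ b y] (w.route F e) := by
  have hends := w.ends_edgeMap₁ b he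
  rw [hxy, Sym2.map_mk] at hends
  simp only [route, detour, he, dite_false, List.map_nil]
  refine (isPathBetween_iff.2 ⟨isWalkBetween_singleton _, List.nodup_singleton _⟩).cons hends ?_
  simpa using (w.vertexMap₁_injective b).ne (ne_of_ends_eq hxy)

theorem isPathBetween_route_of_mem {e : G₁.E} (he : w.v₁ ∈ G₁.ends e) {x : G₁.V}
    (hxe : G₁.ends e = s(x, w.v₁)) :
    G.IsPathBetween (w.vertexMap₁ b x) (w.vertexMap₁ b w.v₁)
      (w.vertexMap₁ b x :: (F.verts (w.π ⟨e, he⟩)).map (w.vertexMap₂ b)) (w.route F e) := by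
  have hx : x ≠ w.v₁ := ne_of_ends_eq hxe
  obtain ⟨y, hyπ, hpath, hv₂⟩ := F.isPath (w.π ⟨e, he⟩)
  have havoid : ∀ z ∈ F.verts (w.π ⟨e, he⟩), z ≠ w.v₂ := fun z hz h => hv₂ (h ▸ hz)
  have hy : y ≠ w.v₂ := havoid y (List.mem_of_mem_head? hpath.2.2.1)
  have hpath' := hpath.map (f := w.vertexMap₂ b) (g := w.edgeMap₂)
    (fun z hz z' hz' => w.vertexMap₂_injOn b (havoid z hz) (havoid z' hz'))
    (fun q hq => w.ends_edgeMap₂ b (F.not_mem_ends hq))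
  rw [← w.vertexMap₁_v₁] at hpath'
  simp only [route, detour, he, dite_true]
  refine hpath'.cons (w.ends_edgeMap₁_of_mem b he hx hy hxe hyπ) ?_
  simp only [List.mem_map, not_exists, not_and]
  exact fun z _ => (w.vertexMap₁_ne_vertexMap₂ b hx z).symm

theorem exists_isPathBetween_route (e : G₁.E) : ∃ x y vs, G₁.ends e = s(x, y) ∧
    G.IsPathBetween (w.vertexMap₁ b x) (w.vertexMap₁ b y) vs (w.route F e) := by
  by_cases he : w.v₁ ∈ G₁.ends e
  · obtain ⟨x, hxe⟩ := Sym2.mem_iff_exists.1 he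
    rw [Sym2.eq_swap] at hxe
    exact ⟨x, w.v₁, _, hxe, w.isPathBetween_route_of_mem F he hxe⟩
  · obtain ⟨x, y, hxy⟩ := G₁.exists_ends_eq e
    exact ⟨x, y, _, hxy, w.isPathBetween_route_of_not_mem F he hxy⟩

end Route

theorem immerses_left {k : ℕ} {G₁ G₂ : Multigraph} (w : EdgeSumWitness k G G₁ G₂) {b : G₂.V}
    (hb : b ≠ w.v₂) (hP : G₂.EdgeDisjointPaths w.v₂ b k) : G.Immerses G₁ := by
  obtain ⟨F⟩ : Nonempty (G₂.Fan w.v₂ (⟨b, hb⟩ : {y // y ≠ w.v₂})) :=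
    hP.nonempty_fan hb.symm w.deg₂
  choose x y vs hxy hpath using w.exists_isPathBetween_route F
  exact ⟨⟨w.vertexMap₁ ⟨b, hb⟩, w.vertexMap₁_injective _, vs, w.route F,
    fun e => ⟨x e, y e, hxy e, hpath e⟩, fun _ _ hne => w.route_disjoint F hne⟩⟩

noncomputable def swap {k : ℕ} {G₁ G₂ : Multigraph} (w : EdgeSumWitness k G G₁ G₂) :
    EdgeSumWitness k G G₂ G₁ where
  v₁ := w.v₂
  v₂ := w.v₁
  deg₁ := w.deg₂
  deg₂ := w.deg₁
  π := w.π.symm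
  α := w.α.trans (Equiv.sumComm _ _)
  β := w.β.trans (Equiv.sumCongr (Equiv.sumComm _ _) w.π)
  ends₁ e x y hx hy h := by simpa using w.ends₂ e x y hx hy h
  ends₂ e x y hx hy h := by simpa using w.ends₁ e x y hx hy h
  ends₃ e x y hx hy h₁ h₂ := by
    have h₁' : G₂.ends (w.π (w.π.symm e)).1 = s(x, w.v₂) := by rwa [Equiv.apply_symm_apply]
    simpa [Sym2.eq_swap] using w.ends₃ (w.π.symm e) y x hy hx h₂ h₁'

end EdgeSumWitness

end Multigraph

open Multigraph in
theorem edgeSum_immerses_of_summand_general (k : ℕ) (G G₁ G₂ H : Multigraph)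
    (hsum : IsGroundedEdgeSum k G G₁ G₂)
    (h : G₁.Immerses H ∨ G₂.Immerses H) : G.Immerses H := by
  obtain ⟨w, ⟨b₁, hb₁, hP₁⟩, ⟨b₂, hb₂, hP₂⟩⟩ := hsum
  rcases h with h₁ | h₂
  · exact (w.immerses_left hb₂ hP₂).trans h₁
  · exact (w.swap.immerses_left hb₁ hP₁).trans h₂

open Multigraph in
/-- a grounded edge sum admits any weak immersion that either of the
summands admits. -/
theorem edgeSum_immerses_of_summand (k : ℕ) (hk : 1 ≤ k) (G G₁ G₂ H : Multigraph)
    (hsum : IsGroundedEdgeSum k G G₁ G₂)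
    (h : G₁.Immerses H ∨ G₂.Immerses H) : G.Immerses H :=
  edgeSum_immerses_of_summand_general k G G₁ G₂ H hsum h
end

section
/- Let G = G_1 ⊕_k G_2 be a k-edge sum. If G_1 and G_2 admit tree-cut decompositions (T_1, 𝒳_1), (T_2, 𝒳_2), then G has a tree-cut decomposition whose adhesion equals max{k, adhesion(T_1,𝒳_1), adhesion(T_2,𝒳_2)}, and such that every torso of the new decomposition is isomorphic to a torso of one of the original decompositions, with core vertices mapped to core vertices. -/
open Sym2

/-!
Join the two decomposition trees by a new edge between the node of `T₁` whose bag contains `v₁`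
and the node of `T₂` whose bag contains `v₂`, and put every vertex of `G` into the bag of the node
it occupied in `G₁` or `G₂`. Identifying the `G₂`-side of `G` with `v₁` and deleting the edges
inside it turns `G` back into `G₁`. Along this consolidation the side of an edge of `T₁` in the new
tree is the preimage of its old side, so the cut it defines in `G` corresponds edge by edge to the
old cut in `G₁`, while the new edge defines the cut of the `k` edges between the two sides. The
torso at a node of `T₁` is this consolidation followed by the one defining the old torso, with the
peripheral vertex of the `T₂`-side in the role of `v₁`; hence the two torsos are isomorphic. Nodes
of `T₂` are handled by exchanging `G₁` and `G₂`.
-/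

namespace SimpleGraph

variable {V W : Type*} {G : SimpleGraph V} {H : SimpleGraph W}

lemma Reachable.iff_of_forall_adj {P : V → Prop} (hP : ∀ ⦃x y⦄, G.Adj x y → (P x ↔ P y))
    {x y : V} (h : G.Reachable x y) : P x ↔ P y := by
  obtain ⟨p⟩ := h
  induction p with
  | nil => exact Iff.rfl
  | cons h _ ih => exact (hP h).trans ih

lemma reachable_sum_inl_iff {x y : V} :
    (G ⊕g H).Reachable (.inl x) (.inl y) ↔ G.Reachable x y := by
  refine ⟨fun h => ?_, fun h => h.map Embedding.sumInl.toHom⟩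
  refine (h.iff_of_forall_adj (P := Sum.elim (G.Reachable x) fun _ => False) ?_).1 .rfl
  rintro (a | a) (b | b) hab
  · have hab : G.Adj a b := hab
    exact ⟨fun h => h.trans hab.reachable, fun h => h.trans hab.symm.reachable⟩
  all_goals simp_all

lemma reachable_sum_inr_iff {x y : W} :
    (G ⊕g H).Reachable (.inr x) (.inr y) ↔ H.Reachable x y :=
  Iso.sumComm.reachable_iff.symm.trans reachable_sum_inl_iff

lemma deleteEdges_sum_inl (a b : V) :
    (G ⊕g H).deleteEdges {s(.inl a, .inl b)} = G.deleteEdges {s(a, b)} ⊕g H := by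
  ext (x | x) (y | y) <;> simp

lemma deleteEdges_sum_inr (a b : W) :
    (G ⊕g H).deleteEdges {s(.inr a, .inr b)} = G ⊕g H.deleteEdges {s(a, b)} := by
  ext (x | x) (y | y) <;> simp

lemma IsAcyclic.sum (hG : G.IsAcyclic) (hH : H.IsAcyclic) : (G ⊕g H).IsAcyclic := by
  rw [isAcyclic_iff_forall_adj_isBridge] at hG hH ⊢
  rintro (a | a) (b | b) hab
  · rw [isBridge_iff, deleteEdges_sum_inl, reachable_sum_inl_iff]
    exact hG hab
  · simp at hab
  · simp at hab
  · rw [isBridge_iff, deleteEdges_sum_inr, reachable_sum_inr_iff]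
    exact hH hab

section SumSupEdge

variable {u : V} {w : W}

@[simp] lemma sum_sup_edge_adj_inl_inl {a b : V} :
    ((G ⊕g H) ⊔ edge (.inl u) (.inr w)).Adj (.inl a) (.inl b) ↔ G.Adj a b := by
  simp [edge_adj]

@[simp] lemma sum_sup_edge_adj_inr_inr {a b : W} :
    ((G ⊕g H) ⊔ edge (.inl u) (.inr w)).Adj (.inr a) (.inr b) ↔ H.Adj a b := by
  simp [edge_adj]

@[simp] lemma sum_sup_edge_adj_inl_inr {a : V} {b : W} :
    ((G ⊕g H) ⊔ edge (.inl u) (.inr w)).Adj (.inl a) (.inr b) ↔ a = u ∧ b = w := by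
  simp [edge_adj]

@[simp] lemma sum_sup_edge_adj_inr_inl {a : W} {b : V} :
    ((G ⊕g H) ⊔ edge (.inl u) (.inr w)).Adj (.inr a) (.inl b) ↔ a = w ∧ b = u := by
  simp [edge_adj]

def Embedding.sumSupEdgeInl : G ↪g (G ⊕g H) ⊔ edge (.inl u) (.inr w) where
  toFun := Sum.inl
  inj' := Sum.inl_injective
  map_rel_iff' := sum_sup_edge_adj_inl_inl

def Embedding.sumSupEdgeInr : H ↪g (G ⊕g H) ⊔ edge (.inl u) (.inr w) where
  toFun := Sum.inr
  inj' := Sum.inr_injective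
  map_rel_iff' := sum_sup_edge_adj_inr_inr

def Iso.sumSupEdgeComm :
    (G ⊕g H) ⊔ edge (.inl u) (.inr w) ≃g (H ⊕g G) ⊔ edge (.inl w) (.inr u) where
  toEquiv := Equiv.sumComm V W
  map_rel_iff' := by rintro (a | a) (b | b) <;> simp [edge_adj, and_comm]

lemma IsTree.sum_sup_edge (hG : G.IsTree) (hH : H.IsTree) :
    ((G ⊕g H) ⊔ edge (.inl u) (.inr w)).IsTree :=
  ⟨hG.connected.sum_sup_edge hH.connected,
    (hG.isAcyclic.sum hH.isAcyclic).sup_edge_of_not_reachable (not_reachable_sum_inl_inr _ _)⟩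

lemma deleteEdges_sum_sup_edge_inl (a b : V) :
    ((G ⊕g H) ⊔ edge (.inl u) (.inr w)).deleteEdges {s(.inl a, .inl b)} =
      (G.deleteEdges {s(a, b)} ⊕g H) ⊔ edge (.inl u) (.inr w) := by
  ext (x | x) (y | y) <;> simp [edge_adj]

lemma deleteEdges_sum_sup_edge_bridge :
    ((G ⊕g H) ⊔ edge (.inl u) (.inr w)).deleteEdges {s(.inl u, .inr w)} = G ⊕g H := by
  ext (x | x) (y | y) <;> simp

lemma reachable_sum_sup_edge_inl_iff (hH : H.Preconnected) (x : V) (z : V ⊕ W) :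
    ((G ⊕g H) ⊔ edge (.inl u) (.inr w)).Reachable (.inl x) z ↔
      Sum.elim (G.Reachable x) (fun _ => G.Reachable x u) z := by
  constructor
  · intro h
    refine (h.iff_of_forall_adj ?_).1 .rfl
    rintro (a | a) (b | b) hab <;> simp only [sum_sup_edge_adj_inl_inl, sum_sup_edge_adj_inr_inr,
      sum_sup_edge_adj_inl_inr, sum_sup_edge_adj_inr_inl] at hab
    · exact ⟨fun h => h.trans hab.reachable, fun h => h.trans hab.symm.reachable⟩
    · obtain ⟨rfl, rfl⟩ := hab; exact Iff.rfl
    · obtain ⟨rfl, rfl⟩ := hab; exact Iff.rfl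
    · exact Iff.rfl
  · rcases z with z | z
    · exact fun h => (h.map Embedding.sumInl.toHom).mono le_sup_left
    · exact fun h => h.symm.sum_sup_edge (hH w z)

lemma reachable_sum_inr_iff_isRight (hH : H.Preconnected) (x : W) (z : V ⊕ W) :
    (G ⊕g H).Reachable (.inr x) z ↔ z.isRight := by
  rcases z with z | z
  · simpa using fun h => not_reachable_sum_inl_inr z x h.symm
  · simpa using (hH x z).map Embedding.sumInr.toHom

end SumSupEdge

section DelAt

variable {τ τ' : Type} {T : SimpleGraph τ} {T' : SimpleGraph τ'}

lemma delAt_le_deleteEdges (t u : τ) : Multigraph.delAt T t ≤ T.deleteEdges {s(t, u)} := by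
  intro a b h
  simp only [deleteEdges_adj, Set.mem_singleton_iff, Sym2.eq_iff]
  exact ⟨h.1, by rintro (⟨rfl, -⟩ | ⟨-, rfl⟩) <;> simp_all [Multigraph.delAt]⟩

/-- A path from `u` to `u' ≠ u` avoiding `t` would bypass the bridge `tu`. -/
lemma IsTree.eq_of_reachable_delAt (hT : T.IsTree) {t u u' : τ} (hu : T.Adj t u)
    (hu' : T.Adj t u') (h : (Multigraph.delAt T t).Reachable u u') : u = u' := by
  by_contra hne
  have hu't : (T.deleteEdges {s(t, u)}).Adj u' t := by
    simp only [deleteEdges_adj, Set.mem_singleton_iff, Sym2.eq_iff]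
    exact ⟨hu'.symm, fun h => h.elim (fun h => hu'.ne h.1.symm) (fun h => hne h.1.symm)⟩
  exact isAcyclic_iff_forall_adj_isBridge.1 hT.isAcyclic hu
    ((h.mono (delAt_le_deleteEdges t u)).trans hu't.reachable).symm

lemma Reachable.delAt_map (f : T →g T') (hf : Function.Injective f) {t x y : τ}
    (h : (Multigraph.delAt T t).Reachable x y) :
    (Multigraph.delAt T' (f t)).Reachable (f x) (f y) :=
  h.map (⟨f, fun h => ⟨f.map_rel h.1, hf.ne h.2.1, hf.ne h.2.2⟩⟩ :
    Multigraph.delAt T t →g Multigraph.delAt T' (f t))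

lemma Reachable.delAt_of_forall_ne (f : T →g T') {t' : τ'} (hf : ∀ z, f z ≠ t') {x y : τ}
    (h : T.Reachable x y) : (Multigraph.delAt T' t').Reachable (f x) (f y) :=
  h.map (⟨f, fun h => ⟨f.map_rel h, hf _, hf _⟩⟩ : T →g Multigraph.delAt T' t')

end DelAt

end SimpleGraph

namespace Multigraph

open SimpleGraph

lemma mem_edgeCut_iff_of_ends {G : Multigraph} {U : Set G.V} {e : G.E} {a b : G.V}
    (h : G.ends e = s(a, b)) : e ∈ G.edgeCut U ↔ (a ∈ U ∧ b ∉ U) ∨ (b ∈ U ∧ a ∉ U) := by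
  simp only [edgeCut, Set.mem_ofPred_eq, h, Sym2.eq_iff]
  constructor
  · rintro ⟨a', b', (⟨rfl, rfl⟩ | ⟨rfl, rfl⟩), h⟩ <;> simp [h]
  · rintro (h | h)
    exacts [⟨a, b, Or.inl ⟨rfl, rfl⟩, h⟩, ⟨b, a, Or.inr ⟨rfl, rfl⟩, h⟩]

lemma exists_ends_eq_of_mem {G : Multigraph} {e : G.E} {v : G.V} (h : v ∈ G.ends e) :
    ∃ x, x ≠ v ∧ G.ends e = s(x, v) :=
  ⟨Sym2.Mem.other h, Sym2.other_ne (G.no_loops e) h, by rw [Sym2.eq_swap, Sym2.other_spec h]⟩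

lemma exists_ends_eq_of_notMem {G : Multigraph} {e : G.E} {v : G.V} (h : v ∉ G.ends e) :
    ∃ x y, x ≠ v ∧ y ≠ v ∧ G.ends e = s(x, y) := by
  induction hz : G.ends e using Sym2.ind with
  | h x y => rw [hz] at h; exact ⟨x, y, fun hx => h (hx ▸ Sym2.mem_mk_left x y),
      fun hy => h (hy ▸ Sym2.mem_mk_right x y), rfl⟩

lemma edgeCut_singleton (G : Multigraph) (v : G.V) : G.edgeCut {v} = {e | v ∈ G.ends e} := by
  ext e
  obtain ⟨x, hx, hxe⟩ | ⟨x, y, hx, hy, hxy⟩ :=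
    (em (v ∈ G.ends e)).imp exists_ends_eq_of_mem exists_ends_eq_of_notMem
  · simp [mem_edgeCut_iff_of_ends hxe, hx, hxe]
  · simp [mem_edgeCut_iff_of_ends hxy, hx, hy, hxy, hx.symm, hy.symm]

lemma ncard_edgeCut_singleton (G : Multigraph) (v : G.V) :
    (G.edgeCut {v}).ncard = G.degree v := by
  rw [edgeCut_singleton, degree, ← Nat.card_coe_set_eq]
  rfl

/-- `H` arises from `G` by identifying the fibres of `vmap` (vertices of `H` outside its range
are isolated) and deleting the edges that become loops; `emap` picks out the surviving edges. -/
structure Consolidation (G H : Multigraph) where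
  vmap : G.V → H.V
  emap : H.E → G.E
  emap_injective : Function.Injective emap
  map_ends_emap : ∀ f, Sym2.map vmap (G.ends (emap f)) = H.ends f
  isDiag_of_notMem_range : ∀ e ∉ Set.range emap, (Sym2.map vmap (G.ends e)).IsDiag

namespace Consolidation

variable {G H K : Multigraph} (c : Consolidation G H)

lemma mem_range_emap_iff {e : G.E} :
    e ∈ Set.range c.emap ↔ ¬ (Sym2.map c.vmap (G.ends e)).IsDiag := by
  refine ⟨?_, not_imp_comm.1 (c.isDiag_of_notMem_range e)⟩
  rintro ⟨f, rfl⟩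
  rw [c.map_ends_emap]
  exact H.no_loops f

def comp (d : Consolidation H K) : Consolidation G K where
  vmap := d.vmap ∘ c.vmap
  emap := c.emap ∘ d.emap
  emap_injective := c.emap_injective.comp d.emap_injective
  map_ends_emap f := by
    rw [Function.comp_apply, ← Sym2.map_map, c.map_ends_emap, d.map_ends_emap]
  isDiag_of_notMem_range e he := by
    rw [← Sym2.map_map]
    by_cases hc : e ∈ Set.range c.emap
    · obtain ⟨f, rfl⟩ := hc
      rw [c.map_ends_emap]
      exact d.isDiag_of_notMem_range f fun ⟨g, hg⟩ => he ⟨g, by simp [hg]⟩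
    · exact (c.isDiag_of_notMem_range e hc).map

lemma edgeCut_preimage (U : Set H.V) : G.edgeCut (c.vmap ⁻¹' U) = c.emap '' H.edgeCut U := by
  ext e
  obtain ⟨a, b, hab⟩ : ∃ a b, G.ends e = s(a, b) :=
    Sym2.ind (f := fun z => ∃ a b, z = s(a, b)) (fun a b => ⟨a, b, rfl⟩) _
  rw [mem_edgeCut_iff_of_ends hab]
  by_cases he : e ∈ Set.range c.emap
  · obtain ⟨f, rfl⟩ := he
    have hf : H.ends f = s(c.vmap a, c.vmap b) := by rw [← c.map_ends_emap, hab, Sym2.map_mk]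
    rw [c.emap_injective.mem_set_image, mem_edgeCut_iff_of_ends hf]
    rfl
  · have hdiag := c.isDiag_of_notMem_range e he
    rw [hab, Sym2.map_mk, Sym2.mk_isDiag_iff] at hdiag
    simp only [Set.mem_preimage, hdiag, Set.mem_image]
    exact iff_of_false (by tauto) fun ⟨f, _, hf⟩ => he ⟨f, hf⟩

lemma ncard_edgeCut_preimage (U : Set H.V) :
    (G.edgeCut (c.vmap ⁻¹' U)).ncard = (H.edgeCut U).ncard := by
  rw [edgeCut_preimage, Set.ncard_image_of_injective _ c.emap_injective]

noncomputable def iso {H' : Multigraph} (c' : Consolidation G H') (f : H.V ≃ H'.V)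
    (hf : ∀ x, f (c.vmap x) = c'.vmap x) : Iso H H' where
  vmap := f
  emap := (Equiv.ofInjective _ c.emap_injective).trans <|
    (Equiv.subtypeEquivRight fun e => by
      rw [c.mem_range_emap_iff, c'.mem_range_emap_iff, show c'.vmap = f ∘ c.vmap from
        funext fun x => (hf x).symm, ← Sym2.map_map, Sym2.isDiag_map f.injective]).trans
    (Equiv.ofInjective _ c'.emap_injective).symm
  ends_map h := by
    rw [← c'.map_ends_emap, ← c.map_ends_emap, Sym2.map_map]
    simp [← hf, Equiv.apply_ofInjective_symm]

end Consolidation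

namespace TreeCutDecomp

variable {G : Multigraph} (D : TreeCutDecomp G)

lemma eq_of_mem_bag {s s' : D.T} {v : G.V} (hs : v ∈ D.bag s) (hs' : v ∈ D.bag s') :
    s = s' := by
  by_contra h
  exact Set.disjoint_left.1 (D.disj s s' h) hs hs'

lemma proj_of_mem {t : D.T} {v : G.V} (hv : v ∈ D.bag t) : D.proj t v = .inl ⟨v, hv⟩ := by
  rw [proj, dif_pos hv]

lemma proj_eq_inr_iff {t : D.T} {v : G.V} (hv : v ∉ D.bag t) {u : D.T} (hu : D.tree.Adj t u) :
    D.proj t v = .inr ⟨u, hu⟩ ↔ ∃ s, v ∈ D.bag s ∧ (delAt D.tree t).Reachable s u := by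
  obtain ⟨hadj, s, hs, hsu⟩ := (D.exists_periph t v hv).choose_spec
  rw [proj, dif_neg hv, Sum.inr.injEq, Subtype.mk.injEq]
  refine ⟨fun h => ⟨s, hs, h ▸ hsu⟩, fun ⟨s', hs', hs'u⟩ => ?_⟩
  rw [D.eq_of_mem_bag hs' hs] at hs'u
  exact D.isTree.eq_of_reachable_delAt hadj hu (hsu.symm.trans hs'u)

lemma exists_proj_eq_inr {t : D.T} {v : G.V} (hv : v ∉ D.bag t) :
    ∃ u, ∃ hu : D.tree.Adj t u, D.proj t v = .inr ⟨u, hu⟩ :=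
  ⟨_, _, by rw [proj, dif_neg hv]⟩

noncomputable def torsoConsolidation (t : D.T) : Consolidation G (D.torso t) where
  vmap := D.proj t
  emap := Subtype.val
  emap_injective := Subtype.val_injective
  map_ends_emap _ := rfl
  isDiag_of_notMem_range e he := by_contra fun h => he ⟨⟨e, h⟩, rfl⟩

lemma exists_torsoIso {G' : Multigraph} {D' : TreeCutDecomp G'} (c : Consolidation G G')
    {t : D.T} {t' : D'.T} (f : (D.torso t).V ≃ (D'.torso t').V)
    (hf : ∀ x, f (D.proj t x) = D'.proj t' (c.vmap x))
    (hcore : ∀ x, f (.inl x) ∈ D'.torsoCore t') :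
    ∃ φ : Iso (D.torso t) (D'.torso t'), ∀ x ∈ D.torsoCore t, φ.vmap x ∈ D'.torsoCore t' :=
  ⟨(D.torsoConsolidation t).iso (c.comp (D'.torsoConsolidation t')) f hf,
    by rintro _ ⟨x, rfl⟩; exact hcore x⟩

def cutOrders : Set ℕ := {n | ∃ u v, D.tree.Adj u v ∧ n = (G.edgeCut (D.sideSet u v)).ncard}

lemma adhesion_eq_sSup_cutOrders : D.adhesion = sSup D.cutOrders := rfl

lemma bddAbove_cutOrders : BddAbove D.cutOrders :=
  ((Set.finite_range fun p : D.T × D.T => (G.edgeCut (D.sideSet p.1 p.2)).ncard).subset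
    (by rintro _ ⟨u, v, -, rfl⟩; exact ⟨(u, v), rfl⟩)).bddAbove

section Iso

variable {D D' : TreeCutDecomp G} (φ : D.tree ≃g D'.tree)

lemma sideSet_iso (hφ : ∀ t, D'.bag (φ t) = D.bag t) (u v : D.T) :
    D'.sideSet (φ u) (φ v) = D.sideSet u v := by
  let ψ : D.tree.deleteEdges {s(u, v)} ≃g D'.tree.deleteEdges {s(φ u, φ v)} :=
    { φ.toEquiv with
      map_rel_iff' := by
        intro a b
        simp [deleteEdges_adj, φ.injective.eq_iff, φ.map_adj_iff] }
  ext x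
  simp only [sideSet, Set.mem_ofPred_eq, φ.surjective.exists, hφ]
  exact exists_congr fun s => and_congr_left' (ψ.reachable_iff (u := v) (v := s))

def torsoVertexEquivOfIso (hφ : ∀ t, D'.bag (φ t) = D.bag t) (t : D.T) :
    (D.torso t).V ≃ (D'.torso (φ t)).V :=
  Equiv.sumCongr (Equiv.setCongr (hφ t).symm) (φ.toEquiv.subtypeEquiv fun _ => φ.map_adj_iff.symm)

lemma proj_iso (hφ : ∀ t, D'.bag (φ t) = D.bag t) (t : D.T) (x : G.V) :
    D'.proj (φ t) x = torsoVertexEquivOfIso φ hφ t (D.proj t x) := by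
  by_cases hx : x ∈ D.bag t
  · rw [D.proj_of_mem hx, D'.proj_of_mem (by rwa [hφ])]
    rfl
  · obtain ⟨u, hu, hxu⟩ := D.exists_proj_eq_inr hx
    obtain ⟨s, hs, hsu⟩ := (D.proj_eq_inr_iff hx hu).1 hxu
    rw [hxu]
    exact (D'.proj_eq_inr_iff (by rwa [hφ]) (φ.map_adj_iff.2 hu)).2
      ⟨φ s, by rwa [hφ], hsu.delAt_map φ.toHom φ.injective⟩

end Iso

end TreeCutDecomp

namespace EdgeSumWitness

variable {k : ℕ} {G G₁ G₂ : Multigraph} (w : EdgeSumWitness k G G₁ G₂)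

def symm : EdgeSumWitness k G G₂ G₁ where
  v₁ := w.v₂
  v₂ := w.v₁
  deg₁ := w.deg₂
  deg₂ := w.deg₁
  π := w.π.symm
  α := w.α.trans (Equiv.sumComm _ _)
  β := w.β.trans (Equiv.sumCongr (Equiv.sumComm _ _) w.π)
  ends₁ := w.ends₂
  ends₂ := w.ends₁
  ends₃ e x y hx hy hxe hye := by
    have := w.ends₃ (w.π.symm e) y x hy hx hye (by rwa [Equiv.apply_symm_apply])
    simpa [Sym2.eq_swap] using this

def vmap₁ (x : G.V) : G₁.V := Sum.elim Subtype.val (fun _ => w.v₁) (w.α x)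

open Classical in
noncomputable def emap₁ (f : G₁.E) : G.E :=
  w.β.symm (if h : w.v₁ ∈ G₁.ends f then .inr ⟨f, h⟩ else .inl (.inl ⟨f, h⟩))

@[simp] lemma vmap₁_symm_inl (u : {x : G₁.V // x ≠ w.v₁}) :
    w.vmap₁ (w.α.symm (.inl u)) = u := by
  simp [vmap₁]

@[simp] lemma vmap₁_symm_inr (u : {y : G₂.V // y ≠ w.v₂}) :
    w.vmap₁ (w.α.symm (.inr u)) = w.v₁ := by
  simp [vmap₁]

lemma vmap₁_eq_v₁_iff {x : G.V} : w.vmap₁ x = w.v₁ ↔ (w.α x).isRight := by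
  rcases h : w.α x with u | u <;> simp [vmap₁, h, u.prop]

lemma eq_of_vmap₁_eq {x y : G.V} (hx : (w.α x).isLeft) (hy : (w.α y).isLeft)
    (h : w.vmap₁ x = w.vmap₁ y) : x = y := by
  rcases hxα : w.α x with u | u <;> rcases hyα : w.α y with u' | u' <;>
    simp_all [vmap₁, ← Subtype.ext_iff, ← w.α.injective.eq_iff]

lemma emap₁_injective : Function.Injective w.emap₁ := by
  intro e f hef
  have := w.β.symm.injective hef
  split_ifs at this <;> simp_all

lemma map_vmap₁_ends_emap₁ (f : G₁.E) : Sym2.map w.vmap₁ (G.ends (w.emap₁ f)) = G₁.ends f := by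
  by_cases hf : w.v₁ ∈ G₁.ends f
  · obtain ⟨x, hx, hxf⟩ := exists_ends_eq_of_mem hf
    obtain ⟨y, hy, hyf⟩ := exists_ends_eq_of_mem (w.π ⟨f, hf⟩).prop
    rw [emap₁, dif_pos hf, w.ends₃ _ x y hx hy hxf hyf, hxf]
    simp
  · obtain ⟨x, y, hx, hy, hxy⟩ := exists_ends_eq_of_notMem hf
    rw [emap₁, dif_neg hf, w.ends₁ ⟨f, hf⟩ x y hx hy hxy, hxy]
    simp

lemma isDiag_of_notMem_range_emap₁ (e : G.E) (he : e ∉ Set.range w.emap₁) :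
    (Sym2.map w.vmap₁ (G.ends e)).IsDiag := by
  rcases hβ : w.β e with (e₁ | e₂) | e₀
  · exact absurd ⟨e₁, by simp [emap₁, e₁.prop, ← hβ]⟩ he
  · obtain ⟨x, y, hx, hy, hxy⟩ := exists_ends_eq_of_notMem e₂.prop
    rw [← w.β.symm_apply_apply e, hβ, w.ends₂ e₂ x y hx hy hxy]
    simp
  · exact absurd ⟨e₀, by simp [emap₁, e₀.prop, ← hβ]⟩ he

noncomputable def consolidation₁ : Consolidation G G₁ where
  vmap := w.vmap₁
  emap := w.emap₁
  emap_injective := w.emap₁_injective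
  map_ends_emap := w.map_vmap₁_ends_emap₁
  isDiag_of_notMem_range := w.isDiag_of_notMem_range_emap₁

variable (D₁ : TreeCutDecomp G₁) (D₂ : TreeCutDecomp G₂)

noncomputable def node₁ : D₁.T := (D₁.covers w.v₁).choose

lemma v₁_mem_bag_node₁ : w.v₁ ∈ D₁.bag (w.node₁ D₁) := (D₁.covers w.v₁).choose_spec

def leftBag (s : D₁.T) : Set G.V := {x | (w.α x).isLeft ∧ w.vmap₁ x ∈ D₁.bag s}

variable {D₁} in
lemma mem_leftBag {x : G.V} {s : D₁.T} :
    x ∈ w.leftBag D₁ s ↔ (w.α x).isLeft ∧ w.vmap₁ x ∈ D₁.bag s := Iff.rfl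

lemma isLeft_symm_α (x : G.V) : (w.symm.α x).isLeft = (w.α x).isRight :=
  Sum.isLeft_swap _

variable {D₂} in
lemma mem_leftBag_symm {x : G.V} {s : D₂.T} :
    x ∈ w.symm.leftBag D₂ s ↔ (w.α x).isRight ∧ w.symm.vmap₁ x ∈ D₂.bag s := by
  rw [mem_leftBag, isLeft_symm_α]

lemma symm_symm_leftBag : w.symm.symm.leftBag D₁ = w.leftBag D₁ := by
  have hα (x : G.V) : w.symm.symm.α x = w.α x := Sum.swap_swap (w.α x)
  ext s x
  simp only [mem_leftBag, vmap₁, hα]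
  rfl

lemma disjoint_leftBag {s t : D₁.T} (hst : s ≠ t) :
    Disjoint (w.leftBag D₁ s) (w.leftBag D₁ t) :=
  Set.disjoint_left.2 fun _ hs ht => hst (D₁.eq_of_mem_bag hs.2 ht.2)

lemma disjoint_leftBag_symm (s : D₁.T) (t : D₂.T) :
    Disjoint (w.leftBag D₁ s) (w.symm.leftBag D₂ t) :=
  Set.disjoint_left.2 fun x hs ht => by
    rw [mem_leftBag_symm, ← Sum.not_isLeft] at ht
    exact ht.1 hs.1

lemma exists_mem_leftBag {x : G.V} (hx : (w.α x).isLeft) : ∃ s, x ∈ w.leftBag D₁ s :=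
  (D₁.covers (w.vmap₁ x)).imp fun _ hs => ⟨hx, hs⟩

/- Reducible, so that lemmas about `(T₁ ⊕g T₂) ⊔ edge _ _` apply to its tree, whose node type is
only definitionally `D₁.T ⊕ D₂.T`. -/
@[reducible] noncomputable def glue : TreeCutDecomp G where
  T := D₁.T ⊕ D₂.T
  finT := inferInstance
  tree := (D₁.tree ⊕g D₂.tree) ⊔ edge (.inl (w.node₁ D₁)) (.inr (w.symm.node₁ D₂))
  isTree := D₁.isTree.sum_sup_edge D₂.isTree
  bag := Sum.elim (w.leftBag D₁) (w.symm.leftBag D₂)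
  disj := by
    rintro (s | s) (t | t) hst
    · exact w.disjoint_leftBag D₁ fun h => hst (h ▸ rfl)
    · exact w.disjoint_leftBag_symm D₁ D₂ s t
    · exact (w.disjoint_leftBag_symm D₁ D₂ t s).symm
    · exact w.symm.disjoint_leftBag D₂ fun h => hst (h ▸ rfl)
  covers x := by
    by_cases hx : (w.α x).isLeft
    · obtain ⟨s, hs⟩ := w.exists_mem_leftBag D₁ hx
      exact ⟨.inl s, hs⟩
    · rw [Sum.not_isLeft, ← isLeft_symm_α] at hx
      obtain ⟨s, hs⟩ := w.symm.exists_mem_leftBag D₂ hx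
      exact ⟨.inr s, hs⟩

noncomputable def glueSwap : (w.glue D₁ D₂).tree ≃g (w.symm.glue D₂ D₁).tree :=
  Iso.sumSupEdgeComm

lemma glue_bag_glueSwap (t : D₁.T ⊕ D₂.T) :
    (w.symm.glue D₂ D₁).bag (w.glueSwap D₁ D₂ t) = (w.glue D₁ D₂).bag t := by
  rcases t with s | s
  · exact congrFun (w.symm_symm_leftBag D₁) s
  · rfl

lemma sideSet_glue_inl (a b : D₁.T) :
    (w.glue D₁ D₂).sideSet (.inl a) (.inl b) = w.vmap₁ ⁻¹' D₁.sideSet a b := by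
  ext x
  simp only [TreeCutDecomp.sideSet, Set.mem_preimage, Set.mem_ofPred_eq]
  change (∃ N, (((D₁.tree ⊕g D₂.tree) ⊔ _).deleteEdges _).Reachable _ N ∧ x ∈ _) ↔ _
  simp only [deleteEdges_sum_sup_edge_inl, Sum.exists,
    reachable_sum_sup_edge_inl_iff D₂.isTree.connected.preconnected, Sum.elim_inl, Sum.elim_inr,
    mem_leftBag, isLeft_symm_α]
  rcases hx : w.α x with u | u
  · simp [hx, vmap₁]
  · have hv : w.vmap₁ x = w.v₁ := w.vmap₁_eq_v₁_iff.2 (by simp [hx])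
    obtain ⟨s₂, hs₂⟩ := D₂.covers (w.symm.vmap₁ x)
    simp only [hv, Sum.isLeft_inr, Sum.isRight_inr, Bool.false_eq_true, false_and, and_false,
      exists_false, false_or, true_and]
    exact ⟨fun ⟨_, h, _⟩ => ⟨_, h, w.v₁_mem_bag_node₁ D₁⟩,
      fun ⟨s, h, hs⟩ => ⟨s₂, D₁.eq_of_mem_bag hs (w.v₁_mem_bag_node₁ D₁) ▸ h, hs₂⟩⟩

lemma sideSet_glue_bridge :
    (w.glue D₁ D₂).sideSet (.inl (w.node₁ D₁)) (.inr (w.symm.node₁ D₂)) =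
      w.vmap₁ ⁻¹' {w.v₁} := by
  ext x
  simp only [TreeCutDecomp.sideSet, Set.mem_preimage, Set.mem_ofPred_eq, Set.mem_singleton_iff,
    vmap₁_eq_v₁_iff]
  change (∃ N, (((D₁.tree ⊕g D₂.tree) ⊔ _).deleteEdges _).Reachable _ N ∧ x ∈ _) ↔ _
  simp only [deleteEdges_sum_sup_edge_bridge, Sum.exists,
    reachable_sum_inr_iff_isRight D₂.isTree.connected.preconnected, Sum.isRight_inl,
    Sum.isRight_inr, Sum.elim_inr, mem_leftBag_symm, Bool.false_eq_true, false_and, exists_false,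
    false_or, true_and]
  exact ⟨fun ⟨_, h, _⟩ => h, fun h => (D₂.covers _).imp fun _ hs => ⟨h, hs⟩⟩

lemma ncard_edgeCut_sideSet_glue_inl (a b : D₁.T) :
    (G.edgeCut ((w.glue D₁ D₂).sideSet (.inl a) (.inl b))).ncard =
      (G₁.edgeCut (D₁.sideSet a b)).ncard := by
  rw [sideSet_glue_inl]
  exact w.consolidation₁.ncard_edgeCut_preimage _

lemma ncard_edgeCut_sideSet_glue_inr (a b : D₂.T) :
    (G.edgeCut ((w.glue D₁ D₂).sideSet (.inr a) (.inr b))).ncard =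
      (G₂.edgeCut (D₂.sideSet a b)).ncard := by
  rw [← TreeCutDecomp.sideSet_iso (w.glueSwap D₁ D₂) (w.glue_bag_glueSwap D₁ D₂)]
  exact w.symm.ncard_edgeCut_sideSet_glue_inl D₂ D₁ a b

lemma ncard_edgeCut_sideSet_glue_bridge :
    (G.edgeCut ((w.glue D₁ D₂).sideSet (.inl (w.node₁ D₁)) (.inr (w.symm.node₁ D₂)))).ncard =
      k := by
  rw [sideSet_glue_bridge]
  exact (w.consolidation₁.ncard_edgeCut_preimage _).trans
    ((ncard_edgeCut_singleton _ _).trans w.deg₁)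

lemma ncard_edgeCut_sideSet_glue_bridge_symm :
    (G.edgeCut ((w.glue D₁ D₂).sideSet (.inr (w.symm.node₁ D₂)) (.inl (w.node₁ D₁)))).ncard =
      k := by
  rw [← TreeCutDecomp.sideSet_iso (w.glueSwap D₁ D₂) (w.glue_bag_glueSwap D₁ D₂)]
  exact w.symm.ncard_edgeCut_sideSet_glue_bridge D₂ D₁

lemma cutOrders_glue :
    (w.glue D₁ D₂).cutOrders = insert k (D₁.cutOrders ∪ D₂.cutOrders) := by
  ext n
  simp only [TreeCutDecomp.cutOrders, Set.mem_insert_iff, Set.mem_union, Set.mem_ofPred_eq]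
  constructor
  · rintro ⟨a | a, b | b, hab, rfl⟩ <;> simp only [sum_sup_edge_adj_inl_inl,
      sum_sup_edge_adj_inl_inr, sum_sup_edge_adj_inr_inl, sum_sup_edge_adj_inr_inr] at hab
    · exact .inr (.inl ⟨a, b, hab, w.ncard_edgeCut_sideSet_glue_inl D₁ D₂ a b⟩)
    · obtain ⟨rfl, rfl⟩ := hab
      exact .inl (w.ncard_edgeCut_sideSet_glue_bridge D₁ D₂)
    · obtain ⟨rfl, rfl⟩ := hab
      exact .inl (w.ncard_edgeCut_sideSet_glue_bridge_symm D₁ D₂)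
    · exact .inr (.inr ⟨a, b, hab, w.ncard_edgeCut_sideSet_glue_inr D₁ D₂ a b⟩)
  · rintro (rfl | ⟨a, b, hab, rfl⟩ | ⟨a, b, hab, rfl⟩)
    · exact ⟨_, _, sum_sup_edge_adj_inl_inr.2 ⟨rfl, rfl⟩,
        (w.ncard_edgeCut_sideSet_glue_bridge D₁ D₂).symm⟩
    · exact ⟨_, _, sum_sup_edge_adj_inl_inl.2 hab,
        (w.ncard_edgeCut_sideSet_glue_inl D₁ D₂ a b).symm⟩
    · exact ⟨_, _, sum_sup_edge_adj_inr_inr.2 hab,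
        (w.ncard_edgeCut_sideSet_glue_inr D₁ D₂ a b).symm⟩

lemma adhesion_glue : (w.glue D₁ D₂).adhesion = max k (max D₁.adhesion D₂.adhesion) := by
  rw [TreeCutDecomp.adhesion_eq_sSup_cutOrders, cutOrders_glue,
    csSup_insert' (D₁.bddAbove_cutOrders.union D₂.bddAbove_cutOrders),
    csSup_union' D₁.bddAbove_cutOrders D₂.bddAbove_cutOrders]
  rfl

noncomputable def torsoVertexMapInl (a : D₁.T) :
    ↥((w.glue D₁ D₂).bag (.inl a)) ⊕ {u // (w.glue D₁ D₂).tree.Adj (.inl a) u} →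
      ↥(D₁.bag a) ⊕ {u // D₁.tree.Adj a u}
  | .inl x => .inl ⟨w.vmap₁ x, (w.mem_leftBag.1 x.2).2⟩
  | .inr ⟨.inl c, hc⟩ => .inr ⟨c, sum_sup_edge_adj_inl_inl.1 hc⟩
  | .inr ⟨.inr _, hc⟩ => .inl ⟨w.v₁, (sum_sup_edge_adj_inl_inr.1 hc).1 ▸ w.v₁_mem_bag_node₁ D₁⟩

lemma torsoVertexMapInl_bijective (a : D₁.T) : (w.torsoVertexMapInl D₁ D₂ a).Bijective := by
  constructor
  · rintro (⟨x, hx⟩ | ⟨c | c, hc⟩) (⟨y, hy⟩ | ⟨d | d, hd⟩) h <;>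
      simp only [torsoVertexMapInl, Sum.inl.injEq, Sum.inr.injEq, Subtype.mk.injEq,
        reduceCtorEq] at h ⊢
    · exact w.eq_of_vmap₁_eq (w.mem_leftBag.1 hx).1 (w.mem_leftBag.1 hy).1 h
    · exact absurd (w.vmap₁_eq_v₁_iff.1 h) (by simpa using (w.mem_leftBag.1 hx).1)
    · exact h
    · exact absurd (w.vmap₁_eq_v₁_iff.1 h.symm) (by simpa using (w.mem_leftBag.1 hy).1)
    · exact (sum_sup_edge_adj_inl_inr.1 hc).2.trans (sum_sup_edge_adj_inl_inr.1 hd).2.symm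
  · rintro (⟨p, hp⟩ | ⟨c, hc⟩)
    · by_cases h : p = w.v₁
      · subst h
        exact ⟨.inr ⟨.inr (w.symm.node₁ D₂), sum_sup_edge_adj_inl_inr.2
          ⟨D₁.eq_of_mem_bag hp (w.v₁_mem_bag_node₁ D₁), rfl⟩⟩, rfl⟩
      · exact ⟨.inl ⟨w.α.symm (.inl ⟨p, h⟩), w.mem_leftBag.2 ⟨by simp, by simpa using hp⟩⟩,
          congrArg Sum.inl (Subtype.ext (w.vmap₁_symm_inl _))⟩
    · exact ⟨.inr ⟨.inl c, sum_sup_edge_adj_inl_inl.2 hc⟩, rfl⟩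

lemma reachable_delAt_glue_inl {a s t : D₁.T} (h : (delAt D₁.tree a).Reachable s t) :
    (delAt (w.glue D₁ D₂).tree (.inl a)).Reachable (.inl s) (.inl t) :=
  h.delAt_map Embedding.sumSupEdgeInl.toHom Sum.inl_injective

lemma reachable_delAt_glue_inr (a : D₁.T) (s t : D₂.T) :
    (delAt (w.glue D₁ D₂).tree (.inl a)).Reachable (.inr s) (.inr t) :=
  (D₂.isTree.connected.preconnected s t).delAt_of_forall_ne Embedding.sumSupEdgeInr.toHom
    fun _ => Sum.inr_ne_inl

lemma torsoVertexMapInl_proj (a : D₁.T) (x : G.V) :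
    w.torsoVertexMapInl D₁ D₂ a ((w.glue D₁ D₂).proj (.inl a) x) = D₁.proj a (w.vmap₁ x) := by
  by_cases hx : x ∈ (w.glue D₁ D₂).bag (.inl a)
  · rw [TreeCutDecomp.proj_of_mem _ hx, D₁.proj_of_mem (w.mem_leftBag.1 hx).2]
    rfl
  have hright (hr : (w.α x).isRight) : ∃ s₂, x ∈ (w.glue D₁ D₂).bag (.inr s₂) :=
    (D₂.covers _).imp fun _ hs => w.mem_leftBag_symm.2 ⟨hr, hs⟩
  by_cases hv : w.vmap₁ x ∈ D₁.bag a
  · have hr : (w.α x).isRight := Sum.not_isLeft.1 fun hl => hx (w.mem_leftBag.2 ⟨hl, hv⟩)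
    have hv₁ := w.vmap₁_eq_v₁_iff.2 hr
    obtain rfl := D₁.eq_of_mem_bag (hv₁ ▸ hv) (w.v₁_mem_bag_node₁ D₁)
    obtain ⟨s₂, hs₂⟩ := hright hr
    have hadj : (w.glue D₁ D₂).tree.Adj (.inl (w.node₁ D₁)) (.inr (w.symm.node₁ D₂)) :=
      sum_sup_edge_adj_inl_inr.2 ⟨rfl, rfl⟩
    rw [((w.glue D₁ D₂).proj_eq_inr_iff hx hadj).2 ⟨_, hs₂, w.reachable_delAt_glue_inr D₁ D₂ _ _ _⟩,
      D₁.proj_of_mem hv]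
    exact congrArg Sum.inl (Subtype.ext hv₁.symm)
  obtain ⟨c, hc, hproj⟩ := D₁.exists_proj_eq_inr hv
  obtain ⟨s, hs, hsc⟩ := (D₁.proj_eq_inr_iff hv hc).1 hproj
  have hsc' := w.reachable_delAt_glue_inl D₁ D₂ hsc
  rw [hproj, ((w.glue D₁ D₂).proj_eq_inr_iff hx (sum_sup_edge_adj_inl_inl.2 hc)).2]
  · rfl
  by_cases hl : (w.α x).isLeft
  · exact ⟨.inl s, w.mem_leftBag.2 ⟨hl, hs⟩, hsc'⟩
  · have hv₁ := w.vmap₁_eq_v₁_iff.2 (Sum.not_isLeft.1 hl)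
    obtain rfl := D₁.eq_of_mem_bag (hv₁ ▸ hs) (w.v₁_mem_bag_node₁ D₁)
    obtain ⟨s₂, hs₂⟩ := hright (Sum.not_isLeft.1 hl)
    have hbridge : (delAt (w.glue D₁ D₂).tree (.inl a)).Adj (.inr (w.symm.node₁ D₂))
        (.inl (w.node₁ D₁)) :=
      ⟨sum_sup_edge_adj_inr_inl.2 ⟨rfl, rfl⟩, Sum.inr_ne_inl,
        fun h => hv (Sum.inl_injective h ▸ hv₁ ▸ w.v₁_mem_bag_node₁ D₁)⟩
    exact ⟨_, hs₂, (w.reachable_delAt_glue_inr D₁ D₂ _ _ _).trans (hbridge.reachable.trans hsc')⟩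

lemma exists_torsoIso_glue_inl (a : D₁.T) :
    ∃ φ : Iso ((w.glue D₁ D₂).torso (.inl a)) (D₁.torso a),
      ∀ x ∈ (w.glue D₁ D₂).torsoCore (.inl a), φ.vmap x ∈ D₁.torsoCore a :=
  (w.glue D₁ D₂).exists_torsoIso w.consolidation₁
    (Equiv.ofBijective _ (w.torsoVertexMapInl_bijective D₁ D₂ a))
    (w.torsoVertexMapInl_proj D₁ D₂ a) fun _ => ⟨_, rfl⟩

lemma exists_torsoIso_glue_inr (a : D₂.T) :
    ∃ φ : Iso ((w.glue D₁ D₂).torso (.inr a)) (D₂.torso a),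
      ∀ x ∈ (w.glue D₁ D₂).torsoCore (.inr a), φ.vmap x ∈ D₂.torsoCore a :=
  (w.glue D₁ D₂).exists_torsoIso w.symm.consolidation₁
    ((TreeCutDecomp.torsoVertexEquivOfIso (w.glueSwap D₁ D₂) (w.glue_bag_glueSwap D₁ D₂)
      (.inr a)).trans (Equiv.ofBijective _ (w.symm.torsoVertexMapInl_bijective D₂ D₁ a)))
    (fun x => (congrArg (w.symm.torsoVertexMapInl D₂ D₁ a)
      (TreeCutDecomp.proj_iso (w.glueSwap D₁ D₂) (w.glue_bag_glueSwap D₁ D₂) (.inr a) x).symm).trans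
        (w.symm.torsoVertexMapInl_proj D₂ D₁ a x))
    fun _ => ⟨_, rfl⟩

end EdgeSumWitness

end Multigraph

open Multigraph in
/-- tree-cut decompositions combine along edge sums, with adhesion the
maximum of `k` and the adhesions, and torsos isomorphic to original torsos with core
vertices mapped to core vertices. -/
theorem treeCutDecomp_of_edgeSum (k : ℕ) (G G₁ G₂ : Multigraph)
    (hsum : IsEdgeSum k G G₁ G₂) (D₁ : TreeCutDecomp G₁) (D₂ : TreeCutDecomp G₂) :
    ∃ D : TreeCutDecomp G,
      D.adhesion = max k (max D₁.adhesion D₂.adhesion) ∧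
      ∀ t : D.T,
        (∃ (t₁ : D₁.T) (φ : Iso (D.torso t) (D₁.torso t₁)),
          ∀ x ∈ D.torsoCore t, φ.vmap x ∈ D₁.torsoCore t₁) ∨
        (∃ (t₂ : D₂.T) (φ : Iso (D.torso t) (D₂.torso t₂)),
          ∀ x ∈ D.torsoCore t, φ.vmap x ∈ D₂.torsoCore t₂) := by
  obtain ⟨w⟩ := hsum
  refine ⟨w.glue D₁ D₂, w.adhesion_glue D₁ D₂, ?_⟩
  rintro (a | a)
  · exact .inl ⟨a, w.exists_torsoIso_glue_inl D₁ D₂ a⟩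
  · exact .inr ⟨a, w.exists_torsoIso_glue_inr D₁ D₂ a⟩
end
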